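/- arXiv:1004.0888 — 2 statements merged into one kernel-verified Lean document; each statement's English description precedes it below -/
import Mathlib

section
/- Let d ≥ 2 and n ≥ 1, and let A_{a,j} ∈ Matrix (Fin d) (Fin d) ℂ for a ∈ {0,1} and j ∈ Fin n satisfy ∑_j A_{0,j}ᴴ A_{0,j} = ∑_j A_{1,j}ᴴ A_{1,j} = 1 and Tr(A_{0,j}ᴴ A_{1,j}) = 0 for every j. Define the channels Φ_a(ρ) = ∑_{j} E_{jj} ⊗ (A_{a,j} ρ A_{a,j}ᴴ) on Matrix (Fin d) (Fin d) ℂ, with output indexed by (Fin n) × (Fin d), and let φ = (1/√d) ∑_{i} e_i ⊗ e_i be the maximally entangled unit vector in ℂ^d ⊗ ℂ^d. Then Tr[(Φ₀ ⊗ id)(φφᴴ) · (Φ₁ ⊗ id)(φφᴴ)] = 0 and ‖(Φ₀ ⊗ id)(φφᴴ) − (Φ₁ ⊗ id)(φφᴴ)‖₁ = 2; in particular ‖Φ₀ − Φ₁‖_⋄ = 2, so the channels are perfectly distinguishable. -/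
open Matrix Kronecker BigOperators ComplexOrder

noncomputable def traceNorm {n : Type*} [Fintype n] [DecidableEq n] (A : Matrix n n ℂ) : ℝ :=
  (((Matrix.posSemidef_conjTranspose_mul_self A).1.eigenvectorUnitary.1 *
      Matrix.diagonal (((↑) : ℝ → ℂ) ∘ (√·) ∘ (Matrix.posSemidef_conjTranspose_mul_self A).1.eigenvalues) *
      (star (Matrix.posSemidef_conjTranspose_mul_self A).1.eigenvectorUnitary : Matrix n n ℂ)).trace).re

def IsDensity {n : Type*} [Fintype n] (ρ : Matrix n n ℂ) : Prop :=
  ρ.PosSemidef ∧ ρ.trace = 1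

def tensorId {X Y Z : Type*} (Φ : Matrix X X ℂ → Matrix Y Y ℂ)
    (ρ : Matrix (X × Z) (X × Z) ℂ) : Matrix (Y × Z) (Y × Z) ℂ :=
  Matrix.of fun p q => Φ (Matrix.of fun x x' => ρ (x, p.2) (x', q.2)) p.1 q.1

noncomputable def ChoiMatrix {X Y : Type*} [Fintype X] [DecidableEq X] [Fintype Y]
    (Φ : Matrix X X ℂ → Matrix Y Y ℂ) : Matrix (Y × X) (Y × X) ℂ :=
  ∑ j : X, ∑ k : X, (Φ (Matrix.single j k 1)) ⊗ₖ (Matrix.single j k 1)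

def IsChannel {X Y : Type*} [Fintype X] [DecidableEq X] [Fintype Y]
    (Φ : Matrix X X ℂ →ₗ[ℂ] Matrix Y Y ℂ) : Prop :=
  (∀ M, (Φ M).trace = M.trace) ∧ (ChoiMatrix (⇑Φ)).PosSemidef

def SeparableOp {Y Z : Type*} [Fintype Y] [Fintype Z]
    (P : Matrix (Y × Z) (Y × Z) ℂ) : Prop :=
  ∃ (N : ℕ) (Q : Fin N → Matrix Y Y ℂ) (R : Fin N → Matrix Z Z ℂ),
    (∀ i, (Q i).PosSemidef) ∧ (∀ i, (R i).PosSemidef) ∧ P = ∑ i, Q i ⊗ₖ R i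

def partialTranspose {Y Z : Type*} (M : Matrix (Y × Z) (Y × Z) ℂ) :
    Matrix (Y × Z) (Y × Z) ℂ :=
  Matrix.of fun p q => M (p.1, q.2) (q.1, p.2)

def IsPPT {Y Z : Type*} [Fintype Y] [Fintype Z] (M : Matrix (Y × Z) (Y × Z) ℂ) : Prop :=
  M.PosSemidef ∧ (partialTranspose M).PosSemidef

/-!
With the Kraus operators `K_{a,j} = e_j ⊗ A_{a,j}` of the flagged channels, the output
`(Φ_a ⊗ id)(φφᴴ)` is the mixture `(1/d) ∑_j |vec K_{a,j}⟩⟨vec K_{a,j}|` (written with `vec Kᵀ`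
below, as Mathlib's `vec` stacks columns), and
`⟨vec K_{0,j}, vec K_{1,k}⟩ = δ_{jk} Tr(A_{0,j}ᴴ A_{1,j}) = 0`: the flags make distinct indices
orthogonal and the trace condition handles equal ones. Hence the two outputs are states with
orthogonal supports, so their product vanishes. For `P, Q ≥ 0` with `P Q = 0`, uniqueness of the
positive and negative parts gives `|P - Q| = P + Q`, so `‖P - Q‖₁ = Tr P + Tr Q = 2`.
-/

section TraceNorm

open scoped MatrixOrder

variable {m : Type*} [Fintype m] [DecidableEq m]

lemma traceNorm_eq_re_trace_abs (A : Matrix m m ℂ) : traceNorm A = (CFC.abs A).trace.re := by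
  have hA := posSemidef_conjTranspose_mul_self A
  rw [CFC.abs, star_eq_conjTranspose, CFC.sqrt_eq_real_sqrt _ hA.nonneg, cfcₙ_eq_cfc, hA.1.cfc_eq]
  rfl

lemma traceNorm_sub_of_mul_eq_zero {P Q : Matrix m m ℂ} (hP : P.PosSemidef) (hQ : Q.PosSemidef)
    (hPQ : P * Q = 0) : traceNorm (P - Q) = (P.trace + Q.trace).re := by
  obtain ⟨hpos, hneg⟩ := CFC.posPart_negPart_unique rfl hPQ hP.nonneg hQ.nonneg
  rw [traceNorm_eq_re_trace_abs, ← CFC.posPart_add_negPart _ (hP.1.sub hQ.1), hpos, hneg,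
    trace_add]

end TraceNorm

section PureEnsemble

variable {m ι κ : Type*} [Fintype m] [Fintype ι] [Fintype κ]

lemma posSemidef_sum_vecMulVec_self_star (u : ι → m → ℂ) :
    (∑ i, vecMulVec (u i) (star (u i))).PosSemidef :=
  posSemidef_sum _ fun i _ => posSemidef_vecMulVec_self_star (u i)

lemma trace_sum_vecMulVec_self_star (u : ι → m → ℂ) :
    (∑ i, vecMulVec (u i) (star (u i))).trace = ∑ i, star (u i) ⬝ᵥ u i := by
  simp only [trace_sum, trace_vecMulVec, dotProduct_comm (u _)]

lemma sum_vecMulVec_mul_sum_vecMulVec_eq_zero (u : ι → m → ℂ) (w : κ → m → ℂ)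
    (h : ∀ i k, star (u i) ⬝ᵥ w k = 0) :
    (∑ i, vecMulVec (u i) (star (u i))) * ∑ k, vecMulVec (w k) (star (w k)) = 0 := by
  simp only [Finset.sum_mul_sum, vecMulVec_mul_vecMulVec, h, zero_smul, vecMulVec_zero,
    Finset.sum_const_zero]

end PureEnsemble

section Kraus

variable {X Y Z ι : Type*}

lemma tensorId_kraus [Fintype X] [Fintype Z] [DecidableEq Z] [Fintype ι]
    (K : ι → Matrix Y X ℂ) (M : Matrix (X × Z) (X × Z) ℂ) :
    tensorId (fun ρ : Matrix X X ℂ => ∑ j, K j * ρ * (K j)ᴴ) M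
      = ∑ j, (K j ⊗ₖ (1 : Matrix Z Z ℂ)) * M * (K j ⊗ₖ (1 : Matrix Z Z ℂ))ᴴ := by
  ext p q
  simp [tensorId, Matrix.sum_apply, mul_apply, Fintype.sum_prod_type, one_apply, Finset.sum_mul,
    apply_ite (starRingEnd ℂ)]

lemma mul_vecMulVec_mul_conjTranspose [Fintype X] (K : Matrix Y X ℂ) (u : X → ℂ) :
    K * vecMulVec u (star u) * Kᴴ = vecMulVec (K *ᵥ u) (star (K *ᵥ u)) := by
  rw [mul_vecMulVec, vecMulVec_mul, star_mulVec]

lemma smul_vec_one_eq_ite [DecidableEq X] (c : ℂ) :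
    c • vec (1 : Matrix X X ℂ) = fun p => if p.1 = p.2 then c else 0 := by
  ext ⟨x, y⟩
  simp [vec, one_apply, eq_comm]

lemma kronecker_one_mulVec_vec_one [Fintype X] [DecidableEq X] (K : Matrix Y X ℂ) :
    (K ⊗ₖ (1 : Matrix X X ℂ)) *ᵥ vec 1 = vec Kᵀ := by
  rw [kronecker_mulVec_vec, Matrix.one_mul, Matrix.one_mul]

lemma star_vec_transpose_dotProduct_vec_transpose [Fintype X] [Fintype Y] (K L : Matrix Y X ℂ) :
    star (vec Kᵀ) ⬝ᵥ vec Lᵀ = (Kᴴ * L).trace := by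
  rw [star_vec_dotProduct_vec, conjTranspose_transpose_eq_transpose_conjTranspose,
    trace_transpose_mul]

/-- The operator `e_j ⊗ A`. -/
def flagKraus [DecidableEq ι] (j : ι) (A : Matrix Y X ℂ) : Matrix (ι × Y) X ℂ :=
  of fun p x => if p.1 = j then A p.2 x else 0

variable [DecidableEq ι]

lemma single_kronecker_conj_eq [Fintype X] (j : ι) (A : Matrix Y X ℂ) (ρ : Matrix X X ℂ) :
    single j j 1 ⊗ₖ (A * ρ * Aᴴ) = flagKraus j A * ρ * (flagKraus j A)ᴴ := by
  ext p q
  simp only [kroneckerMap_apply, single_apply, mul_apply, conjTranspose_apply, RCLike.star_def,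
    Finset.sum_mul, Finset.mul_sum, ite_mul, one_mul, zero_mul, Finset.sum_ite_irrel,
    Finset.sum_const_zero, flagKraus, of_apply, apply_ite (starRingEnd ℂ), map_zero, mul_ite,
    mul_zero]
  grind

lemma flagKraus_conjTranspose_mul_flagKraus [Fintype ι] [Fintype Y] (j k : ι)
    (A B : Matrix Y X ℂ) :
    (flagKraus j A)ᴴ * flagKraus k B = if j = k then Aᴴ * B else 0 := by
  ext x x'
  obtain rfl | h := eq_or_ne j k <;>
    simp [flagKraus, mul_apply, Fintype.sum_prod_type, apply_ite (starRingEnd ℂ), *, Ne.symm]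

lemma tensorId_flagged_vecMulVec_smul_vec_one [Fintype X] [DecidableEq X] [Fintype ι]
    (A : ι → Matrix Y X ℂ) (c : ℂ) :
    tensorId (fun ρ : Matrix X X ℂ => ∑ j, single j j 1 ⊗ₖ (A j * ρ * (A j)ᴴ))
        (vecMulVec (c • vec 1) (star (c • vec 1)))
      = ∑ j, vecMulVec (c • vec (flagKraus j (A j))ᵀ)
          (star (c • vec (flagKraus j (A j))ᵀ)) := by
  simp only [single_kronecker_conj_eq, tensorId_kraus, mul_vecMulVec_mul_conjTranspose,
    mulVec_smul, kronecker_one_mulVec_vec_one]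

lemma star_smul_vec_flagKraus_dotProduct [Fintype X] [Fintype ι] [Fintype Y] (c : ℂ) (j k : ι)
    (A B : Matrix Y X ℂ) :
    star (c • vec (flagKraus j A)ᵀ) ⬝ᵥ (c • vec (flagKraus k B)ᵀ)
      = star c * c * if j = k then (Aᴴ * B).trace else 0 := by
  rw [star_smul, smul_dotProduct, dotProduct_smul, star_vec_transpose_dotProduct_vec_transpose,
    flagKraus_conjTranspose_mul_flagKraus, smul_smul, apply_ite trace, trace_zero,
    smul_eq_mul]

end Kraus

theorem flagged_channels_perfectly_distinguishable_general
    (d n : ℕ) (hd : 2 ≤ d)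
    (A : Fin 2 → Fin n → Matrix (Fin d) (Fin d) ℂ)
    (hA0 : ∑ j, (A 0 j)ᴴ * A 0 j = 1)
    (hA1 : ∑ j, (A 1 j)ᴴ * A 1 j = 1)
    (horth : ∀ j, ((A 0 j)ᴴ * A 1 j).trace = 0)
    (Φ : Fin 2 → Matrix (Fin d) (Fin d) ℂ → Matrix (Fin n × Fin d) (Fin n × Fin d) ℂ)
    (hΦ : ∀ a ρ, Φ a ρ = ∑ j, Matrix.single j j 1 ⊗ₖ (A a j * ρ * (A a j)ᴴ))
    (φ : Fin d × Fin d → ℂ)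
    (hφ : φ = fun p => if p.1 = p.2 then ((1 / Real.sqrt d : ℝ) : ℂ) else 0) :
    ((tensorId (Φ 0) (Matrix.vecMulVec φ (star φ))) *
        (tensorId (Φ 1) (Matrix.vecMulVec φ (star φ)))).trace = 0 ∧
    traceNorm (tensorId (Φ 0) (Matrix.vecMulVec φ (star φ)) -
        tensorId (Φ 1) (Matrix.vecMulVec φ (star φ))) = 2 := by
  set c : ℂ := ((1 / Real.sqrt d : ℝ) : ℂ)
  have hc : star c * c = (d : ℂ)⁻¹ := by
    rw [Complex.star_def, Complex.conj_ofReal, ← Complex.ofReal_mul, one_div, ← mul_inv,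
      Real.mul_self_sqrt d.cast_nonneg, Complex.ofReal_inv, Complex.ofReal_natCast]
  set w : Fin 2 → Fin n → (Fin n × Fin d) × Fin d → ℂ :=
    fun a j => c • vec (flagKraus j (A a j))ᵀ
  have hout a :
      tensorId (Φ a) (vecMulVec φ (star φ)) = ∑ j, vecMulVec (w a j) (star (w a j)) := by
    rw [funext (hΦ a), hφ, ← smul_vec_one_eq_ite, tensorId_flagged_vecMulVec_smul_vec_one]
  have hA a : ∑ j, (A a j)ᴴ * A a j = 1 := by
    fin_cases a
    exacts [hA0, hA1]
  have htrace a : (tensorId (Φ a) (vecMulVec φ (star φ))).trace = 1 := by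
    simp only [hout, trace_sum_vecMulVec_self_star, w, star_smul_vec_flagKraus_dotProduct, if_true]
    rw [← Finset.mul_sum, ← trace_sum, hA, trace_one, Fintype.card_fin, hc,
      inv_mul_cancel₀ (Nat.cast_ne_zero.2 (by omega))]
  have hmul :
      tensorId (Φ 0) (vecMulVec φ (star φ)) * tensorId (Φ 1) (vecMulVec φ (star φ)) = 0 := by
    rw [hout, hout]
    refine sum_vecMulVec_mul_sum_vecMulVec_eq_zero _ _ fun j k => ?_
    rw [star_smul_vec_flagKraus_dotProduct]
    split_ifs with h
    · rw [← h, horth, mul_zero]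
    · rw [mul_zero]
  have hpsd a : (tensorId (Φ a) (vecMulVec φ (star φ))).PosSemidef :=
    hout a ▸ posSemidef_sum_vecMulVec_self_star _
  refine ⟨by rw [hmul, trace_zero], ?_⟩
  rw [traceNorm_sub_of_mul_eq_zero (hpsd 0) (hpsd 1) hmul, htrace, htrace]
  norm_num

/-- flagged-Kraus channels with entrywise-orthogonal Kraus operators produce
orthogonal (hence perfectly distinguishable) outputs on the maximally entangled state. -/
theorem flagged_channels_perfectly_distinguishable
    (d n : ℕ) (hd : 2 ≤ d) (hn : 1 ≤ n)
    (A : Fin 2 → Fin n → Matrix (Fin d) (Fin d) ℂ)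
    (hA0 : ∑ j, (A 0 j)ᴴ * A 0 j = 1)
    (hA1 : ∑ j, (A 1 j)ᴴ * A 1 j = 1)
    (horth : ∀ j, ((A 0 j)ᴴ * A 1 j).trace = 0)
    (Φ : Fin 2 → Matrix (Fin d) (Fin d) ℂ → Matrix (Fin n × Fin d) (Fin n × Fin d) ℂ)
    (hΦ : ∀ a ρ, Φ a ρ = ∑ j, Matrix.single j j 1 ⊗ₖ (A a j * ρ * (A a j)ᴴ))
    (φ : Fin d × Fin d → ℂ)
    (hφ : φ = fun p => if p.1 = p.2 then ((1 / Real.sqrt d : ℝ) : ℂ) else 0) :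
    ((tensorId (Φ 0) (Matrix.vecMulVec φ (star φ))) *
        (tensorId (Φ 1) (Matrix.vecMulVec φ (star φ)))).trace = 0 ∧
    traceNorm (tensorId (Φ 0) (Matrix.vecMulVec φ (star φ)) -
        tensorId (Φ 1) (Matrix.vecMulVec φ (star φ))) = 2 :=
  flagged_channels_perfectly_distinguishable_general d n hd A hA0 hA1 horth Φ hΦ φ hφ
end

section
/- Let σ_x = !![0, 1; 1, 0], σ_y = !![0, −i; i, 0], σ_z = !![1, 0; 0, −1] be the Pauli matrices in Matrix (Fin 2) (Fin 2) ℂ. Then the maximum over unit vectors ψ ∈ ℂ² of |⟨ψ, σ_x ψ⟩| + |⟨ψ, σ_y ψ⟩| + |⟨ψ, σ_z ψ⟩| equals √3; that is, the sum is at most √3 for every unit vector ψ, with equality attained. (Consequently the corresponding pair of qubit-input channels with N = 3 random unitaries satisfies ‖Φ₀ − Φ₁‖_NE = 2/√3.) -/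
open Matrix Kronecker BigOperators ComplexOrder

open Complex

/-!
For `ψ = (a, b)` the three Pauli expectations are the components
`(2 Re (ā b), 2 Im (ā b), |a|² - |b|²)` of the Bloch vector of `ψ`, whose Euclidean length is
`|a|² + |b|²`. By Cauchy–Schwarz against `(1, 1, 1)`, the sum of the absolute values of the
components of a unit vector in `ℝ³` is at most `√3`, with equality along the diagonal.
-/

abbrev pauliX : Matrix (Fin 2) (Fin 2) ℂ := !![0, 1; 1, 0]
abbrev pauliY : Matrix (Fin 2) (Fin 2) ℂ := !![0, -I; I, 0]
abbrev pauliZ : Matrix (Fin 2) (Fin 2) ℂ := !![1, 0; 0, -1]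

noncomputable def pauliExpectationSum (ψ : Fin 2 → ℂ) : ℝ :=
  ‖star ψ ⬝ᵥ pauliX *ᵥ ψ‖ + ‖star ψ ⬝ᵥ pauliY *ᵥ ψ‖ + ‖star ψ ⬝ᵥ pauliZ *ᵥ ψ‖

lemma star_smul_dotProduct_mulVec_smul {n R : Type*} [Fintype n] [CommSemiring R] [StarRing R]
    (M : Matrix n n R) (c : R) (v : n → R) :
    star (c • v) ⬝ᵥ M *ᵥ (c • v) = star c * c * (star v ⬝ᵥ M *ᵥ v) := by
  simp only [star_smul, mulVec_smul, dotProduct_smul, smul_dotProduct, smul_eq_mul]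
  ring

lemma pauliExpectationSum_smul (c : ℂ) (ψ : Fin 2 → ℂ) :
    pauliExpectationSum (c • ψ) = ‖c‖ ^ 2 * pauliExpectationSum ψ := by
  simp only [pauliExpectationSum, star_smul_dotProduct_mulVec_smul, norm_mul, norm_star]
  ring

lemma star_dotProduct_mulVec_fin_two {R : Type*} [NonUnitalNonAssocSemiring R] [Star R]
    (M : Matrix (Fin 2) (Fin 2) R) (ψ : Fin 2 → R) :
    star ψ ⬝ᵥ M *ᵥ ψ =
      star (ψ 0) * (M 0 0 * ψ 0 + M 0 1 * ψ 1) + star (ψ 1) * (M 1 0 * ψ 0 + M 1 1 * ψ 1) := by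
  simp only [vec2_dotProduct, mulVec, Pi.star_apply]

lemma star_dotProduct_self_fin_two (ψ : Fin 2 → ℂ) :
    star ψ ⬝ᵥ ψ = (normSq (ψ 0) + normSq (ψ 1) : ℝ) := by
  rw [vec2_dotProduct, ofReal_add, normSq_eq_conj_mul_self, normSq_eq_conj_mul_self]
  rfl

lemma star_dotProduct_pauliX_mulVec (ψ : Fin 2 → ℂ) :
    star ψ ⬝ᵥ pauliX *ᵥ ψ = (2 * (star (ψ 0) * ψ 1).re : ℝ) := by
  rw [star_dotProduct_mulVec_fin_two, ← add_conj]
  simp [mul_comm]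

lemma star_dotProduct_pauliY_mulVec (ψ : Fin 2 → ℂ) :
    star ψ ⬝ᵥ pauliY *ᵥ ψ = (2 * (star (ψ 0) * ψ 1).im : ℝ) := by
  rw [star_dotProduct_mulVec_fin_two,
    ← mul_div_cancel_right₀ ((2 * (star (ψ 0) * ψ 1).im : ℝ) : ℂ) I_ne_zero, ← sub_conj]
  simp only [of_apply, cons_val', cons_val_zero, cons_val_one, cons_val_fin_one, RCLike.star_def,
    map_mul, conj_conj, div_I]
  ring

lemma star_dotProduct_pauliZ_mulVec (ψ : Fin 2 → ℂ) :
    star ψ ⬝ᵥ pauliZ *ᵥ ψ = (normSq (ψ 0) - normSq (ψ 1) : ℝ) := by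
  rw [star_dotProduct_mulVec_fin_two, ofReal_sub, normSq_eq_conj_mul_self,
    normSq_eq_conj_mul_self]
  simp [sub_eq_add_neg]

lemma bloch_components_sq_sum (a b : ℂ) :
    (2 * (star a * b).re) ^ 2 + (2 * (star a * b).im) ^ 2 + (normSq a - normSq b) ^ 2
      = (normSq a + normSq b) ^ 2 := by
  simp only [RCLike.star_def, mul_re, mul_im, conj_re, conj_im, normSq_apply]
  ring

lemma abs_add_abs_add_abs_le_sqrt (x y z : ℝ) :
    |x| + |y| + |z| ≤ √(3 * (x ^ 2 + y ^ 2 + z ^ 2)) := by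
  apply Real.le_sqrt_of_sq_le
  nlinarith [sq_abs x, sq_abs y, sq_abs z, sq_nonneg (|x| - |y|), sq_nonneg (|y| - |z|),
    sq_nonneg (|x| - |z|)]

lemma pauliExpectationSum_le (ψ : Fin 2 → ℂ) :
    pauliExpectationSum ψ ≤ √3 * ‖star ψ ⬝ᵥ ψ‖ := by
  have hnorm : 0 ≤ normSq (ψ 0) + normSq (ψ 1) := add_nonneg (normSq_nonneg _) (normSq_nonneg _)
  rw [pauliExpectationSum, star_dotProduct_pauliX_mulVec, star_dotProduct_pauliY_mulVec,
    star_dotProduct_pauliZ_mulVec, star_dotProduct_self_fin_two]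
  simp only [norm_real, Real.norm_eq_abs]
  calc _ ≤ √(3 * (normSq (ψ 0) + normSq (ψ 1)) ^ 2) := by
        rw [← bloch_components_sq_sum]
        exact abs_add_abs_add_abs_le_sqrt _ _ _
    _ = _ := by rw [Real.sqrt_mul' _ (sq_nonneg _), Real.sqrt_sq hnorm, abs_of_nonneg hnorm]

/-- An unnormalised state with Bloch vector along `(1, 1, 1)`. -/
noncomputable def diagonalState : Fin 2 → ℂ := ![((1 + √3 : ℝ) : ℂ), 1 + I]

lemma normSq_diagonalState_zero : normSq (diagonalState 0) = (1 + √3) ^ 2 := by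
  rw [sq, ← normSq_ofReal]; rfl

lemma normSq_diagonalState_one : normSq (diagonalState 1) = 2 := by
  norm_num [diagonalState, normSq_apply]

lemma star_dotProduct_diagonalState :
    star diagonalState ⬝ᵥ diagonalState = ((6 + 2 * √3 : ℝ) : ℂ) := by
  rw [star_dotProduct_self_fin_two, normSq_diagonalState_zero, normSq_diagonalState_one]
  congr 1
  linear_combination Real.sq_sqrt (show (0 : ℝ) ≤ 3 by norm_num)

lemma pauliExpectationSum_diagonalState :
    pauliExpectationSum diagonalState = √3 * (6 + 2 * √3) := by
  have h3 : √3 ^ 2 = 3 := Real.sq_sqrt (by norm_num)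
  have hre : (star (diagonalState 0) * diagonalState 1).re = 1 + √3 := by simp [diagonalState]
  have him : (star (diagonalState 0) * diagonalState 1).im = 1 + √3 := by simp [diagonalState]
  rw [pauliExpectationSum, star_dotProduct_pauliX_mulVec, star_dotProduct_pauliY_mulVec,
    star_dotProduct_pauliZ_mulVec, hre, him, normSq_diagonalState_zero, normSq_diagonalState_one]
  simp only [norm_real, Real.norm_eq_abs]
  rw [abs_of_nonneg (by positivity), abs_of_nonneg (by nlinarith [Real.sqrt_nonneg 3])]
  linear_combination -h3

lemma exists_unit_pauliExpectationSum_eq_sqrt_three :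
    ∃ ψ : Fin 2 → ℂ, star ψ ⬝ᵥ ψ = 1 ∧ pauliExpectationSum ψ = √3 := by
  set r : ℝ := 6 + 2 * √3
  have hr : 0 < r := by positivity
  set c : ℂ := (((√r)⁻¹ : ℝ) : ℂ)
  have hc : star c * c = ((r⁻¹ : ℝ) : ℂ) := by
    rw [Complex.star_def, conj_ofReal, ← ofReal_mul, ← mul_inv, Real.mul_self_sqrt hr.le]
  have hc' : ‖c‖ ^ 2 = r⁻¹ := by
    rw [norm_real, Real.norm_eq_abs, sq_abs, inv_pow, Real.sq_sqrt hr.le]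
  refine ⟨c • diagonalState, ?_, ?_⟩
  · have := star_smul_dotProduct_mulVec_smul 1 c diagonalState
    rwa [one_mulVec, one_mulVec, hc, star_dotProduct_diagonalState, ← ofReal_mul,
      inv_mul_cancel₀ hr.ne', ofReal_one] at this
  · rw [pauliExpectationSum_smul, hc', pauliExpectationSum_diagonalState, mul_comm √3,
      inv_mul_cancel_left₀ hr.ne']

/-- `max_ψ |⟨ψ, σ_x ψ⟩| + |⟨ψ, σ_y ψ⟩| + |⟨ψ, σ_z ψ⟩| = √3` over unit
vectors `ψ ∈ ℂ²`. -/
theorem pauli_xyz_expectation_max_sqrt_three :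
    (∀ ψ : Fin 2 → ℂ, star ψ ⬝ᵥ ψ = 1 →
      ‖star ψ ⬝ᵥ (!![0, 1; 1, 0] : Matrix (Fin 2) (Fin 2) ℂ).mulVec ψ‖ +
        ‖star ψ ⬝ᵥ (!![0, -Complex.I; Complex.I, 0] :
          Matrix (Fin 2) (Fin 2) ℂ).mulVec ψ‖ +
        ‖star ψ ⬝ᵥ (!![1, 0; 0, -1] : Matrix (Fin 2) (Fin 2) ℂ).mulVec ψ‖
      ≤ Real.sqrt 3) ∧
    (∃ ψ : Fin 2 → ℂ, star ψ ⬝ᵥ ψ = 1 ∧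
      ‖star ψ ⬝ᵥ (!![0, 1; 1, 0] : Matrix (Fin 2) (Fin 2) ℂ).mulVec ψ‖ +
        ‖star ψ ⬝ᵥ (!![0, -Complex.I; Complex.I, 0] :
          Matrix (Fin 2) (Fin 2) ℂ).mulVec ψ‖ +
        ‖star ψ ⬝ᵥ (!![1, 0; 0, -1] : Matrix (Fin 2) (Fin 2) ℂ).mulVec ψ‖
      = Real.sqrt 3) := by
  refine ⟨fun ψ hψ => ?_, exists_unit_pauliExpectationSum_eq_sqrt_three⟩
  exact (pauliExpectationSum_le ψ).trans_eq (by rw [hψ, norm_one, mul_one])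
end
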